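/- Multi-step energy stability: under the setting of the one-step energy dissipation theorem, let N ≥ 1 and suppose (cⁿ)_{n=0}^{N} and (μⁿ)_{n=1}^{N} in V satisfy, for each n = 0, …, N−1, (i) ∫(c^{n+1} − cⁿ)·v dm = −Mτ·a(μ^{n+1}, v) for all v ∈ V and (ii) ∫ μ^{n+1}·q dm = β_s∫(c^{n+1} − cⁿ)·q dm + ∫ f₀'(cⁿ)·q dm + ε²·a(c^{n+1}, q) for all q ∈ V. Then E(c^N) + Σ_{n=0}^{N−1} [ (ε²/2)·a(c^{n+1} − cⁿ, c^{n+1} − cⁿ) + Mτ·a(μ^{n+1}, μ^{n+1}) ] ≤ E(c⁰); in particular the discrete energies are monotone: E(c^{n+1}) ≤ E(cⁿ) for all n, and Mτ·Σ_{n=0}^{N−1} a(μ^{n+1}, μ^{n+1}) ≤ E(c⁰). -/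

import Mathlib

open MeasureTheory

/-- The regularized Landau–Lifshitz double-well potential with cutoff parameter `K`. -/
noncomputable def f0 (K c : ℝ) : ℝ :=
  if K < c then (3*K^2 - 1)/2 * c^2 - 2*K^3*c + (3*K^4 + 1)/4
  else if c < -K then (3*K^2 - 1)/2 * c^2 + 2*K^3*c + (3*K^4 + 1)/4
  else ((c^2 - 1)^2)/4

/-- Its derivative. -/
noncomputable def f0' (K c : ℝ) : ℝ :=
  if K < c then (3*K^2 - 1)*c - 2*K^3
  else if c < -K then (3*K^2 - 1)*c + 2*K^3
  else c^3 - c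

/-- The discrete energy `E(c) = (ε²/2)·a(c,c) + ∫ f₀(c) dm`. -/
noncomputable def discreteEnergy {X : Type*} [MeasurableSpace X] {m : Measure X}
    (K ε : ℝ) {V : Submodule ℝ (Lp ℝ 2 m)} (a : V →ₗ[ℝ] V →ₗ[ℝ] ℝ) (c : V) : ℝ :=
  ε^2/2 * a c c + ∫ x, f0 K ((c : Lp ℝ 2 m) x) ∂m

open scoped InnerProductSpace

/-!
The potential `f₀` is `C²` with `f₀'' ≤ L = 3K² − 1`, so it lies below its tangent parabola:
`f₀(b) ≤ f₀(a) + f₀'(a)(b − a) + (L/2)(b − a)²`. Testing the first equation of the scheme with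
`μⁿ⁺¹` and the second with `cⁿ⁺¹ − cⁿ`, and writing
`2a(u, u − w) = a(u, u) − a(w, w) + a(u − w, u − w)`, this bound gives one step of energy decay,
the stabilization `β_s ≥ L/2` paying for the explicit treatment of `f₀'`. Summing the one-step
inequalities telescopes.
-/

theorem add_sum_range_le_of_forall_add_le {α : Type*} [AddCommMonoid α] [PartialOrder α]
    [IsOrderedAddMonoid α] {E d : ℕ → α} {N : ℕ} (h : ∀ n < N, E (n + 1) + d n ≤ E n) :
    E N + ∑ n ∈ Finset.range N, d n ≤ E 0 := by
  induction N with
  | zero => simp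
  | succ N ih =>
    calc E (N + 1) + ∑ n ∈ Finset.range (N + 1), d n
        = E (N + 1) + d N + ∑ n ∈ Finset.range N, d n := by
          rw [Finset.sum_range_succ, add_comm _ (d N), add_assoc]
      _ ≤ E N + ∑ n ∈ Finset.range N, d n := by gcongr; exact h N N.lt_succ_self
      _ ≤ E 0 := ih fun n hn => h n (hn.trans N.lt_succ_self)

theorem two_mul_apply_sub_eq {R M : Type*} [CommRing R] [AddCommGroup M] [Module R M]
    {a : M →ₗ[R] M →ₗ[R] R} (ha : ∀ u w, a u w = a w u) (u w : M) :
    2 * a u (u - w) = a u u - a w w + a (u - w) (u - w) := by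
  simp only [map_sub, LinearMap.sub_apply, ha w u]
  ring

/-- `ℓ` plays the role of the derivative of `Φ` at `c₀`, which the scheme treats explicitly. -/
theorem stabilized_step_energy_le {H : Type*} [NormedAddCommGroup H] [InnerProductSpace ℝ H]
    {V : Submodule ℝ H} {a : V →ₗ[ℝ] V →ₗ[ℝ] ℝ} (ha : ∀ u w, a u w = a w u)
    {Φ ℓ : H → ℝ} {L M τ ε βs : ℝ} {c₀ c₁ μ : V}
    (hΦ : Φ c₁ ≤ Φ c₀ + ℓ (c₁ - c₀) + L * ‖(c₁ : H) - c₀‖ ^ 2) (hβ : L ≤ βs)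
    (h₁ : ∀ v : V, ⟪(c₁ : H) - c₀, v⟫_ℝ = -(M * τ) * a μ v)
    (h₂ : ∀ q : V, ⟪(μ : H), q⟫_ℝ = βs * ⟪(c₁ : H) - c₀, q⟫_ℝ + ℓ q + ε^2 * a c₁ q) :
    ε^2/2 * a c₁ c₁ + Φ c₁ + (ε^2/2 * a (c₁ - c₀) (c₁ - c₀) + M * τ * a μ μ)
      ≤ ε^2/2 * a c₀ c₀ + Φ c₀ := by
  have hμ := h₁ μ
  have hd := h₂ (c₁ - c₀)
  rw [Submodule.coe_sub, real_inner_comm, hμ, real_inner_self_eq_norm_sq] at hd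
  have hq : ε^2 * a c₁ (c₁ - c₀)
      = ε^2/2 * (a c₁ c₁ - a c₀ c₀ + a (c₁ - c₀) (c₁ - c₀)) := by
    rw [← two_mul_apply_sub_eq ha]; ring
  have hL := mul_le_mul_of_nonneg_right hβ (sq_nonneg ‖(c₁ : H) - c₀‖)
  linarith

section Potential

variable {K : ℝ}

theorem f0_neg (hK : 0 ≤ K) (c : ℝ) : f0 K (-c) = f0 K c := by
  unfold f0
  split_ifs <;> first | (exfalso; linarith) | ring

theorem f0'_neg (hK : 0 ≤ K) (c : ℝ) : f0' K (-c) = -f0' K c := by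
  unfold f0'
  split_ifs <;> first | (exfalso; linarith) | ring

theorem f0_nonneg (hK : 1 ≤ K) (c : ℝ) : 0 ≤ f0 K c := by
  have hK2 : 0 ≤ K ^ 2 - 1 := by nlinarith
  unfold f0
  split_ifs
  · nlinarith [sq_nonneg ((3*K^2-1)*c - 2*K^3), pow_nonneg hK2 3]
  · nlinarith [sq_nonneg ((3*K^2-1)*c + 2*K^3), pow_nonneg hK2 3]
  · positivity

theorem f0_le_quadratic (hK : 0 ≤ K) (c : ℝ) : f0 K c ≤ 1/4 + (3*K^2-1)/2 * c^2 := by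
  unfold f0
  split_ifs with h1 h2
  · nlinarith [mul_le_mul_of_nonneg_left h1.le (pow_nonneg hK 3), sq_nonneg (K^2)]
  · nlinarith [mul_le_mul_of_nonneg_left h2.le (pow_nonneg hK 3), sq_nonneg (K^2)]
  · push Not at h1 h2
    nlinarith [mul_nonneg (sub_nonneg.2 h2) (sub_nonneg.2 h1), sq_nonneg (K*c)]

theorem abs_f0'_le (hK : 1 ≤ K) (c : ℝ) : |f0' K c| ≤ (3*K^2-1) * |c| := by
  have hK2 : 1 ≤ K^2 := by nlinarith
  unfold f0'
  split_ifs with h1 h2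
  · rw [abs_of_pos (by nlinarith), abs_of_pos (by linarith)]
    nlinarith
  · rw [abs_of_neg (by nlinarith), abs_of_neg (by linarith)]
    nlinarith
  · push Not at h1 h2
    rw [abs_le]
    rcases abs_cases c with ⟨h, hc⟩ | ⟨h, hc⟩ <;> rw [h] <;> constructor
    · nlinarith [mul_nonneg hc (show 0 ≤ c^2 + 3*K^2 - 2 by nlinarith)]
    · nlinarith [mul_nonneg (sub_nonneg.2 h2) (sub_nonneg.2 h1)]
    · nlinarith [mul_nonneg (sub_nonneg.2 h2) (sub_nonneg.2 h1)]
    · nlinarith [mul_nonneg (neg_nonneg.2 hc.le) (show 0 ≤ c^2 + 3*K^2 - 2 by nlinarith)]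

/-- The branch of `f₀` beyond `K` is the second-order Taylor polynomial of the quartic at `K`. -/
theorem f0_le_extension (hK : 0 ≤ K) (c : ℝ) :
    f0 K c ≤ (3*K^2 - 1)/2 * c^2 - 2*K^3*c + (3*K^4 + 1)/4 := by
  unfold f0
  split_ifs with h1 h2
  · rfl
  · nlinarith [mul_nonneg (pow_nonneg hK 3) (show 0 ≤ -c by linarith)]
  · push Not at h1 h2
    nlinarith [mul_nonneg (mul_nonneg (sq_nonneg (c - K)) (sub_nonneg.2 h1))
      (show 0 ≤ 3*K + c by linarith)]

theorem quartic_le_taylor {x y : ℝ} (hx : |x| ≤ K) (hy : |y| ≤ K) :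
    (y^2-1)^2/4 ≤ (x^2-1)^2/4 + (x^3-x)*(y-x) + (3*K^2-1)/2*(y-x)^2 := by
  have hx2 : x^2 ≤ K^2 := sq_le_sq' (abs_le.1 hx).1 (abs_le.1 hx).2
  have hy2 : y^2 ≤ K^2 := sq_le_sq' (abs_le.1 hy).1 (abs_le.1 hy).2
  nlinarith [mul_nonneg (sq_nonneg (y-x)) (show 0 ≤ 6*K^2 - 3*x^2 - 2*x*y - y^2 by
    nlinarith [sq_nonneg (x - y)])]

theorem f0_le_taylor_of_lt (hK : 0 ≤ K) {a : ℝ} (ha : K < a) (b : ℝ) :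
    f0 K b ≤ f0 K a + f0' K a * (b - a) + (3*K^2-1)/2 * (b - a)^2 := by
  have hfa : f0 K a = (3*K^2 - 1)/2 * a^2 - 2*K^3*a + (3*K^4 + 1)/4 := if_pos ha
  have hf'a : f0' K a = (3*K^2 - 1)*a - 2*K^3 := if_pos ha
  rw [hfa, hf'a]
  linarith [f0_le_extension hK b]

theorem f0_le_taylor_of_abs_le (hK : 0 ≤ K) {a : ℝ} (ha : |a| ≤ K) (b : ℝ) :
    f0 K b ≤ f0 K a + f0' K a * (b - a) + (3*K^2-1)/2 * (b - a)^2 := by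
  obtain ⟨ha₁, ha₂⟩ := abs_le.1 ha
  simp only [f0, f0', if_neg (not_lt.2 ha₂), if_neg (not_lt.2 ha₁)]
  split_ifs with hb₁ hb₂
  · have := quartic_le_taylor ha (y := K) (by rw [abs_of_nonneg hK])
    nlinarith [mul_nonneg (sub_nonneg.2 hb₁.le)
      (mul_nonneg (sq_nonneg (a-K)) (show (0:ℝ) ≤ a+2*K by linarith))]
  · have := quartic_le_taylor ha (y := -K) (by rw [abs_neg, abs_of_nonneg hK])
    nlinarith [mul_nonneg (mul_nonneg (sq_nonneg (a+K))
      (show (0:ℝ) ≤ 2*K-a by linarith)) (show (0:ℝ) ≤ -K-b by linarith)]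
  · exact quartic_le_taylor ha (abs_le.2 ⟨not_lt.1 hb₂, not_lt.1 hb₁⟩)

theorem f0_le_taylor (hK : 0 ≤ K) (a b : ℝ) :
    f0 K b ≤ f0 K a + f0' K a * (b - a) + (3*K^2-1)/2 * (b - a)^2 := by
  rcases lt_or_ge K a with ha | ha
  · exact f0_le_taylor_of_lt hK ha b
  rcases lt_or_ge a (-K) with ha' | ha'
  · have := f0_le_taylor_of_lt hK (a := -a) (by linarith) (-b)
    rw [f0_neg hK, f0_neg hK, f0'_neg hK] at this
    linarith
  · exact f0_le_taylor_of_abs_le hK (abs_le.2 ⟨ha', ha⟩) b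

theorem measurable_f0 (K : ℝ) : Measurable (f0 K) :=
  Measurable.ite (measurableSet_lt measurable_const measurable_id) (by fun_prop)
    (Measurable.ite (measurableSet_lt measurable_id measurable_const) (by fun_prop) (by fun_prop))

theorem measurable_f0' (K : ℝ) : Measurable (f0' K) :=
  Measurable.ite (measurableSet_lt measurable_const measurable_id) (by fun_prop)
    (Measurable.ite (measurableSet_lt measurable_id measurable_const) (by fun_prop) (by fun_prop))

end Potential

section Lebesgue

variable {X : Type*} [MeasurableSpace X] {m : Measure X} {K : ℝ}

theorem L2.integral_mul_eq_inner (f g : Lp ℝ 2 m) : ∫ x, f x * g x ∂m = ⟪f, g⟫_ℝ := by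
  simp [L2.inner_def, mul_comm]

theorem L2.integral_sub_mul_eq_inner (f g h : Lp ℝ 2 m) :
    ∫ x, (f x - g x) * h x ∂m = ⟪f - g, h⟫_ℝ := by
  rw [← L2.integral_mul_eq_inner]
  refine integral_congr_ae ?_
  filter_upwards [Lp.coeFn_sub f g] with x hx
  rw [hx, Pi.sub_apply]

theorem L2.integrable_mul (f g : Lp ℝ 2 m) : Integrable (fun x => f x * g x) m := by
  simpa [mul_comm] using L2.integrable_inner (𝕜 := ℝ) f g

theorem integrable_f0'_comp_mul (hK : 1 ≤ K) (f g : Lp ℝ 2 m) :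
    Integrable (fun x => f0' K (f x) * g x) m := by
  refine ((L2.integrable_mul f g).norm.const_mul (3*K^2-1)).mono'
    (((measurable_f0' K).comp_aemeasurable
      (Lp.aestronglyMeasurable f).aemeasurable).aestronglyMeasurable.mul
      (Lp.aestronglyMeasurable g)) (Filter.Eventually.of_forall fun x => ?_)
  simp only [Real.norm_eq_abs, abs_mul, ← mul_assoc]
  exact mul_le_mul_of_nonneg_right (abs_f0'_le hK (f x)) (abs_nonneg _)

theorem discreteEnergy_nonneg (hK : 1 ≤ K) {ε : ℝ} {V : Submodule ℝ (Lp ℝ 2 m)}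
    {a : V →ₗ[ℝ] V →ₗ[ℝ] ℝ} (ha : ∀ v, 0 ≤ a v v) (c : V) : 0 ≤ discreteEnergy K ε a c :=
  add_nonneg (mul_nonneg (by positivity) (ha c)) (integral_nonneg fun x => f0_nonneg hK _)

variable [IsFiniteMeasure m]

theorem integrable_f0_comp (hK : 1 ≤ K) (f : Lp ℝ 2 m) : Integrable (fun x => f0 K (f x)) m := by
  have hbound := (integrable_const (1/4 : ℝ)).add
    ((L2.integrable_mul f f).const_mul ((3*K^2-1)/2))
  refine hbound.mono' ((measurable_f0 K).comp_aemeasurable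
    (Lp.aestronglyMeasurable f).aemeasurable).aestronglyMeasurable
    (Filter.Eventually.of_forall fun x => ?_)
  rw [Real.norm_eq_abs, abs_of_nonneg (f0_nonneg hK _)]
  simpa only [Pi.add_apply, sq] using f0_le_quadratic (by linarith) (f x)

theorem integral_f0_le_taylor (hK : 1 ≤ K) (f g : Lp ℝ 2 m) :
    ∫ x, f0 K (g x) ∂m
      ≤ ∫ x, f0 K (f x) ∂m + ∫ x, f0' K (f x) * (g - f) x ∂m + (3*K^2-1)/2 * ‖g - f‖ ^ 2 := by
  have hf := integrable_f0_comp hK f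
  have hf' := integrable_f0'_comp_mul hK f (g - f)
  have hf₁ : Integrable (fun x => f0 K (f x) + f0' K (f x) * (g - f) x) m := hf.add hf'
  have hsq := (L2.integrable_mul (g - f) (g - f)).const_mul ((3*K^2-1)/2)
  calc ∫ x, f0 K (g x) ∂m
      ≤ ∫ x, (f0 K (f x) + f0' K (f x) * (g - f) x
          + (3*K^2-1)/2 * ((g - f) x * (g - f) x)) ∂m := by
        refine integral_mono_ae (integrable_f0_comp hK g) (hf₁.add hsq) ?_
        filter_upwards [Lp.coeFn_sub g f] with x hx
        rw [hx, Pi.sub_apply, ← sq]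
        exact f0_le_taylor (by linarith) (f x) (g x)
    _ = _ := by
        rw [integral_add hf₁ hsq, integral_add hf hf', integral_const_mul,
          L2.integral_mul_eq_inner, real_inner_self_eq_norm_sq]

theorem discreteEnergy_step_le (hK : 1 ≤ K) {V : Submodule ℝ (Lp ℝ 2 m)}
    {a : V →ₗ[ℝ] V →ₗ[ℝ] ℝ} (ha : ∀ u w, a u w = a w u) {M τ ε βs : ℝ}
    (hβ : (3*K^2 - 1)/2 ≤ βs) {c₀ c₁ μ : V}
    (h₁ : ∀ v : V, ∫ x, ((c₁ : Lp ℝ 2 m) x - (c₀ : Lp ℝ 2 m) x) * (v : Lp ℝ 2 m) x ∂m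
      = -(M * τ) * a μ v)
    (h₂ : ∀ q : V, ∫ x, (μ : Lp ℝ 2 m) x * (q : Lp ℝ 2 m) x ∂m
      = βs * ∫ x, ((c₁ : Lp ℝ 2 m) x - (c₀ : Lp ℝ 2 m) x) * (q : Lp ℝ 2 m) x ∂m
        + ∫ x, f0' K ((c₀ : Lp ℝ 2 m) x) * (q : Lp ℝ 2 m) x ∂m + ε^2 * a c₁ q) :
    discreteEnergy K ε a c₁ + (ε^2/2 * a (c₁ - c₀) (c₁ - c₀) + M * τ * a μ μ)
      ≤ discreteEnergy K ε a c₀ := by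
  simp only [L2.integral_sub_mul_eq_inner, L2.integral_mul_eq_inner] at h₁ h₂
  exact stabilized_step_energy_le (Φ := fun f => ∫ x, f0 K (f x) ∂m)
    (ℓ := fun q => ∫ x, f0' K ((c₀ : Lp ℝ 2 m) x) * q x ∂m) ha
    (integral_f0_le_taylor hK (c₀ : Lp ℝ 2 m) c₁) hβ h₁ h₂

end Lebesgue

theorem multi_step_energy_stability_general
    {X : Type*} [MeasurableSpace X] (m : Measure X) [IsFiniteMeasure m]
    (K : ℝ) (hK : 1 ≤ K)
    (V : Submodule ℝ (Lp ℝ 2 m)) (a : V →ₗ[ℝ] V →ₗ[ℝ] ℝ)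
    (ha_symm : ∀ u w : V, a u w = a w u)
    (ha_nonneg : ∀ v : V, 0 ≤ a v v)
    (M τ ε βs : ℝ) (hM : 0 < M) (hτ : 0 < τ) (hβ : (3*K^2 - 1)/2 ≤ βs)
    (N : ℕ) (c : ℕ → V) (μ : ℕ → V)
    (h1 : ∀ n < N, ∀ v : V,
      ∫ x, ((c (n+1) : Lp ℝ 2 m) x - (c n : Lp ℝ 2 m) x) * (v : Lp ℝ 2 m) x ∂m
        = -(M * τ) * a (μ (n+1)) v)
    (h2 : ∀ n < N, ∀ q : V,
      ∫ x, (μ (n+1) : Lp ℝ 2 m) x * (q : Lp ℝ 2 m) x ∂m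
        = βs * ∫ x, ((c (n+1) : Lp ℝ 2 m) x - (c n : Lp ℝ 2 m) x) * (q : Lp ℝ 2 m) x ∂m
          + ∫ x, f0' K ((c n : Lp ℝ 2 m) x) * (q : Lp ℝ 2 m) x ∂m
          + ε^2 * a (c (n+1)) q) :
    discreteEnergy K ε a (c N)
        + ∑ n ∈ Finset.range N,
            (ε^2/2 * a (c (n+1) - c n) (c (n+1) - c n) + M * τ * a (μ (n+1)) (μ (n+1)))
      ≤ discreteEnergy K ε a (c 0)
    ∧ (∀ n < N, discreteEnergy K ε a (c (n+1)) ≤ discreteEnergy K ε a (c n))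
    ∧ M * τ * ∑ n ∈ Finset.range N, a (μ (n+1)) (μ (n+1)) ≤ discreteEnergy K ε a (c 0) := by
  have step := fun n hn =>
    discreteEnergy_step_le (m := m) hK ha_symm hβ (h1 n hn) (h2 n hn)
  have hd : ∀ n, 0 ≤ ε^2/2 * a (c (n+1) - c n) (c (n+1) - c n) :=
    fun n => mul_nonneg (by positivity) (ha_nonneg _)
  have hμ : ∀ n, 0 ≤ M * τ * a (μ (n+1)) (μ (n+1)) :=
    fun n => mul_nonneg (by positivity) (ha_nonneg _)
  have total := add_sum_range_le_of_forall_add_le (E := fun n => discreteEnergy K ε a (c n)) step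
  refine ⟨total, fun n hn => by linarith [step n hn, hd n, hμ n], ?_⟩
  have hsum : ∑ n ∈ Finset.range N, M * τ * a (μ (n+1)) (μ (n+1))
      ≤ ∑ n ∈ Finset.range N, (ε^2/2 * a (c (n+1) - c n) (c (n+1) - c n)
        + M * τ * a (μ (n+1)) (μ (n+1))) :=
    Finset.sum_le_sum fun n _ => le_add_of_nonneg_left (hd n)
  rw [Finset.mul_sum]
  linarith [discreteEnergy_nonneg (ε := ε) hK ha_nonneg (c N)]

/-- Multi-step energy stability for the stabilized semi-implicit scheme. -/
theorem multi_step_energy_stability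
    {X : Type*} [MeasurableSpace X] (m : Measure X) [IsFiniteMeasure m]
    (K : ℝ) (hK : 1 ≤ K)
    (V : Submodule ℝ (Lp ℝ 2 m)) (a : V →ₗ[ℝ] V →ₗ[ℝ] ℝ)
    (ha_symm : ∀ u w : V, a u w = a w u)
    (ha_nonneg : ∀ v : V, 0 ≤ a v v)
    (M τ ε βs : ℝ) (hM : 0 < M) (hτ : 0 < τ) (hβ : (3*K^2 - 1)/2 ≤ βs)
    (N : ℕ) (hN : 1 ≤ N) (c : ℕ → V) (μ : ℕ → V)
    (h1 : ∀ n < N, ∀ v : V,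
      ∫ x, ((c (n+1) : Lp ℝ 2 m) x - (c n : Lp ℝ 2 m) x) * (v : Lp ℝ 2 m) x ∂m
        = -(M * τ) * a (μ (n+1)) v)
    (h2 : ∀ n < N, ∀ q : V,
      ∫ x, (μ (n+1) : Lp ℝ 2 m) x * (q : Lp ℝ 2 m) x ∂m
        = βs * ∫ x, ((c (n+1) : Lp ℝ 2 m) x - (c n : Lp ℝ 2 m) x) * (q : Lp ℝ 2 m) x ∂m
          + ∫ x, f0' K ((c n : Lp ℝ 2 m) x) * (q : Lp ℝ 2 m) x ∂m
          + ε^2 * a (c (n+1)) q) :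
    discreteEnergy K ε a (c N)
        + ∑ n ∈ Finset.range N,
            (ε^2/2 * a (c (n+1) - c n) (c (n+1) - c n) + M * τ * a (μ (n+1)) (μ (n+1)))
      ≤ discreteEnergy K ε a (c 0)
    ∧ (∀ n < N, discreteEnergy K ε a (c (n+1)) ≤ discreteEnergy K ε a (c n))
    ∧ M * τ * ∑ n ∈ Finset.range N, a (μ (n+1)) (μ (n+1)) ≤ discreteEnergy K ε a (c 0) :=
  multi_step_energy_stability_general m K hK V a ha_symm ha_nonneg M τ ε βs hM hτ hβ N c μ h1 h2
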